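/- Fix a positive integer x₀ and define the probability density f_{x₀}(v) = (4/π) · sin( x₀ · arcsin v )² / sqrt(1 − v²) for v ∈ (0,1). Then: (i) for every v ∈ [0,1], ∫_0^v f_{x₀}(u) du = (2 arcsin v)/π − sin( 2 x₀ arcsin v ) / ( π x₀ ); and (ii) the expectation ∫_0^1 v · f_{x₀}(v) dv = 8 / ( 4π − π/x₀² ). -/

import Mathlib

open Real

/-- The probability density of the time-of-flight speed `V(M_{x₀})` of the cursor of
Feynman's quantum computer when the excitation is started at site `x₀`. -/
noncomputable def speedDensity (x₀ : ℕ) (v : ℝ) : ℝ :=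
  (4 / π) * Real.sin (x₀ * Real.arcsin v) ^ 2 / Real.sqrt (1 - v ^ 2)

/-!
Under `v = sin θ` the density becomes `(4/π) sin²(x₀θ) dθ`, so both integrals are computed by
the fundamental theorem of calculus with antiderivatives `Φ ∘ arcsin`, which differentiate to
`Φ'(arcsin v)/√(1 - v²)`. For the CDF, `Φ` integrates `(4/π) sin²(x₀θ) = (2/π)(1 - cos 2x₀θ)`.
For the mean the extra factor is `v = sin θ`, and product-to-sum turns `sin θ (1 - cos 2x₀θ)` into
sines of `θ`, `(1 + 2x₀)θ` and `(1 - 2x₀)θ`; as `x₀` is an integer, the resulting cosines all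
vanish at `θ = π/2`, leaving only the value at `0`. The density is unbounded at `v = 1`, but being
a nonnegative derivative of a continuous function it is integrable.
-/

open Set

theorem integral_div_sqrt_comp_arcsin {Φ φ : ℝ → ℝ} (hΦ : ∀ θ, HasDerivAt Φ (φ θ) θ)
    {a b : ℝ} (ha : -1 ≤ a) (hab : a ≤ b) (hb : b ≤ 1) (hφ : ∀ u ∈ Ioo a b, 0 ≤ φ (arcsin u)) :
    ∫ u in a..b, φ (arcsin u) / √(1 - u ^ 2) = Φ (arcsin b) - Φ (arcsin a) := by
  have hcont : ContinuousOn (Φ ∘ arcsin) (Icc a b) :=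
    ((continuous_iff_continuousAt.2 fun θ => (hΦ θ).continuousAt).comp
      continuous_arcsin).continuousOn
  have hderiv : ∀ u ∈ Ioo a b, HasDerivAt (Φ ∘ arcsin) (φ (arcsin u) / √(1 - u ^ 2)) u :=
    fun u hu => by
      simpa only [mul_one_div] using
        (hΦ _).comp u (hasDerivAt_arcsin (by linarith [hu.1]) (by linarith [hu.2]))
  have hint : IntervalIntegrable (fun u => φ (arcsin u) / √(1 - u ^ 2)) MeasureTheory.volume a b :=
    (intervalIntegrable_iff_integrableOn_Ioo_of_le hab).2 <|
      (intervalIntegral.integrableOn_deriv_of_nonneg hcont hderiv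
        fun u hu => div_nonneg (hφ u hu) (sqrt_nonneg _)).mono_set Ioo_subset_Ioc_self
  exact intervalIntegral.integral_eq_sub_of_hasDerivAt_of_le hab hcont hderiv hint

noncomputable def cdfAntideriv (k θ : ℝ) : ℝ :=
  2 * θ / π - sin (2 * k * θ) / (π * k)

noncomputable def meanAntideriv (k θ : ℝ) : ℝ :=
  2 / π * (cos ((1 + 2 * k) * θ) / (2 * (1 + 2 * k))
    + cos ((1 - 2 * k) * θ) / (2 * (1 - 2 * k)) - cos θ)

theorem hasDerivAt_cdfAntideriv {k : ℝ} (hk : k ≠ 0) (θ : ℝ) :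
    HasDerivAt (cdfAntideriv k) (4 / π * sin (k * θ) ^ 2) θ := by
  have h := (((hasDerivAt_id' θ).const_mul 2).div_const π).sub
    (((hasDerivAt_id' θ).const_mul (2 * k)).sin.div_const (π * k))
  refine h.congr_deriv ?_
  rw [show 2 * k * θ = 2 * (k * θ) by ring, cos_two_mul, cos_sq']
  field_simp
  ring

theorem hasDerivAt_meanAntideriv {k : ℝ} (hk₁ : 1 + 2 * k ≠ 0) (hk₂ : 1 - 2 * k ≠ 0) (θ : ℝ) :
    HasDerivAt (meanAntideriv k) (4 / π * (sin θ * sin (k * θ) ^ 2)) θ := by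
  have h := (((((hasDerivAt_id' θ).const_mul (1 + 2 * k)).cos.div_const (2 * (1 + 2 * k))).add
    (((hasDerivAt_id' θ).const_mul (1 - 2 * k)).cos.div_const (2 * (1 - 2 * k)))).sub
    (hasDerivAt_cos θ)).const_mul (2 / π)
  refine h.congr_deriv ?_
  rw [add_mul, sub_mul, one_mul, sin_add, sin_sub,
    show 2 * k * θ = 2 * (k * θ) by ring, cos_two_mul, cos_sq']
  field_simp
  ring

theorem meanAntideriv_pi_div_two (n : ℕ) : meanAntideriv n (π / 2) = 0 := by
  have hcos : ∀ m : ℤ, cos ((1 + 2 * m) * (π / 2)) = 0 := fun m =>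
    cos_eq_zero_iff.2 ⟨m, by ring⟩
  have h₁ : cos ((1 + 2 * (n : ℝ)) * (π / 2)) = 0 := mod_cast hcos n
  have h₂ : cos ((1 - 2 * (n : ℝ)) * (π / 2)) = 0 := by
    simpa [sub_eq_add_neg] using hcos (-n)
  simp [meanAntideriv, h₁, h₂]

theorem meanAntideriv_zero {k : ℝ} (hk : k ≠ 0) (hk₁ : 1 + 2 * k ≠ 0) (hk₂ : 1 - 2 * k ≠ 0) :
    meanAntideriv k 0 = -(8 / (4 * π - π / k ^ 2)) := by
  have hden : 4 * π - π / k ^ 2 = -(π * ((1 + 2 * k) * (1 - 2 * k)) / k ^ 2) := by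
    field_simp
    ring
  simp only [meanAntideriv, mul_zero, cos_zero]
  rw [hden]
  field_simp
  ring

theorem mul_speedDensity_eq (x₀ : ℕ) {u : ℝ} (hu₁ : -1 ≤ u) (hu₂ : u ≤ 1) :
    u * speedDensity x₀ u = 4 / π * (sin (arcsin u) * sin (x₀ * arcsin u) ^ 2) / √(1 - u ^ 2) := by
  rw [sin_arcsin hu₁ hu₂, speedDensity]
  ring

theorem speedDensity_cdf_and_mean (x₀ : ℕ) (hx₀ : 1 ≤ x₀) :
    (∀ v : ℝ, 0 ≤ v → v ≤ 1 →
      (∫ u in (0:ℝ)..v, speedDensity x₀ u) =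
        2 * Real.arcsin v / π - Real.sin (2 * x₀ * Real.arcsin v) / (π * x₀)) ∧
    (∫ v in (0:ℝ)..1, v * speedDensity x₀ v) = 8 / (4 * π - π / (x₀ : ℝ) ^ 2) := by
  have hx : (1 : ℝ) ≤ x₀ := mod_cast hx₀
  have hx₁ : (1 + 2 * x₀ : ℝ) ≠ 0 := by linarith
  have hx₂ : (1 - 2 * x₀ : ℝ) ≠ 0 := by linarith
  refine ⟨fun v hv₀ hv₁ => ?_, ?_⟩
  · have h := integral_div_sqrt_comp_arcsin (hasDerivAt_cdfAntideriv (k := x₀) (by positivity))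
      (by norm_num) hv₀ hv₁ fun u _ => by positivity
    unfold speedDensity
    rw [h, arcsin_zero]
    simp [cdfAntideriv]
  · have h := integral_div_sqrt_comp_arcsin (hasDerivAt_meanAntideriv hx₁ hx₂)
      (by norm_num) zero_le_one le_rfl fun u hu => by
        rw [sin_arcsin (by linarith [hu.1]) hu.2.le]
        have := hu.1.le
        positivity
    have integrand : EqOn (fun u => u * speedDensity x₀ u)
        (fun u => 4 / π * (sin (arcsin u) * sin (x₀ * arcsin u) ^ 2) / √(1 - u ^ 2))
        (uIcc 0 1) := fun u hu => by
      rw [uIcc_of_le zero_le_one] at hu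
      exact mul_speedDensity_eq x₀ (by linarith [hu.1]) hu.2
    rw [intervalIntegral.integral_congr integrand, h, arcsin_one, arcsin_zero,
      meanAntideriv_pi_div_two, meanAntideriv_zero (by positivity) hx₁ hx₂, zero_sub, neg_neg]
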